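/- arXiv:2409.06884 — 8 statements merged into one kernel-verified Lean document; each statement's English description precedes it below -/
import Mathlib

section
/- Fix parameters ξ > 0, γ > 0, γ_e > 0, κ_sf ≥ κ > 0, v_max > 0, D_st > D_sf, v̄ > 0, a_min > 0, and gains A ≥ 0, B1 ≥ 0, B_k ≥ 0 for k in a finite index set Φ, satisfying A ≤ (1 − ξ·κ_sf)²/(4ξ) − ξ·(γ − (1 − ξ·κ_sf)/(2ξ))² and A·κ·(D_st − D_sf) ≥ (|κ_sf − ξ·κ_sf² − B1| + Σ_{k∈Φ} B_k)·v̄ + ξ·κ_sf·a_min. Let D0, v0, a0, v1 : [0,∞) → ℝ be differentiable, with v1 having continuous derivative a1 := v1′, and let v_k : [0,∞) → ℝ (k ∈ Φ) be continuous, such that for all t ≥ 0: D0′(t) = v1(t) − v0(t), v0′(t) = a0(t), a0′(t) = (k_d(t) − a0(t))/ξ where k_d(t) = A·(V(D0(t)) − v0(t)) + B1·(W(v1(t)) − v0(t)) + Σ_{k∈Φ} B_k·(W(v_k(t)) − v0(t)); and moreover v0(t) ≥ 0, |v1(t) − v0(t)| ≤ v̄, |v_k(t) − v0(t)| ≤ v̄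 for all k ∈ Φ, and a1(t) ≥ −a_min. Define h(t) = κ_sf·(D0(t) − D_sf) − v0(t) and h_e(t) = κ_sf·(v1(t) − v0(t)) − a0(t) + γ·h(t). If h(0) ≥ 0 and h_e(0) ≥ 0, then h(t) ≥ 0 and h_e(t) ≥ 0 for all t ≥ 0. -/
/-- Scalar Grönwall-type lemma: if `f' t ≥ -K * f t` on `[0,∞)` and `f 0 ≥ 0`,
then `f t ≥ 0` for all `t ≥ 0`. -/
lemma gron_nonneg {f f' : ℝ → ℝ} (K : ℝ)
    (hf : ∀ t ≥ (0:ℝ), HasDerivAt f (f' t) t)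
    (hineq : ∀ t ≥ (0:ℝ), -K * f t ≤ f' t)
    (h0 : 0 ≤ f 0) : ∀ t ≥ (0:ℝ), 0 ≤ f t := by
  have hg : ∀ t ≥ (0:ℝ), HasDerivAt (fun t => f t * Real.exp (K * t))
      ((f' t + K * f t) * Real.exp (K * t)) t := by
    intro t ht
    have he : HasDerivAt (fun t => Real.exp (K * t)) (Real.exp (K * t) * K) t := by
      have h1 : HasDerivAt (fun t : ℝ => K * t) K t := by
        simpa using (hasDerivAt_id t).const_mul K
      exact (Real.hasDerivAt_exp (K * t)).comp t h1
    have : HasDerivAt (fun t => f t * Real.exp (K * t))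
        (f' t * Real.exp (K * t) + f t * (Real.exp (K * t) * K)) t := (hf t ht).mul he
    convert this using 1
    ring
  have hmono : MonotoneOn (fun t => f t * Real.exp (K * t)) (Set.Ici (0:ℝ)) := by
    apply monotoneOn_of_deriv_nonneg (convex_Ici 0)
    · intro t ht
      exact (hg t ht).continuousAt.continuousWithinAt
    · intro t ht
      rw [interior_Ici] at ht
      exact ((hg t (le_of_lt ht)).differentiableAt.differentiableWithinAt)
    · intro t ht
      rw [interior_Ici] at ht
      rw [(hg t (le_of_lt ht)).deriv]
      have h1 := hineq t (le_of_lt ht)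
      have h2 := Real.exp_pos (K * t)
      nlinarith
  intro t ht
  have h1 := hmono (Set.self_mem_Ici) ht ht
  simp only at h1
  have h2 : (0:ℝ) ≤ f t * Real.exp (K * t) := by
    have : f 0 * Real.exp (K * 0) = f 0 := by simp
    nlinarith [h1]
  nlinarith [Real.exp_pos (K * t)]

set_option maxHeartbeats 2000000 in
/-- Theorem 3 of the paper in trajectory form: the CAV with first-order lag `ξ` running
the nominal CCC `k_d = A(V(D0) − v0) + B1(W(v1) − v0) + Σ_k B_k(W(v_k) − v0)`, with gains
satisfying the safety condition (35), keeps `h = κ_sf(D0 − D_sf) − v0 ≥ 0` and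
`h_e = κ_sf(v1 − v0) − a0 + γ·h ≥ 0` for all `t ≥ 0` whenever this holds at `t = 0`. -/
theorem stmt_0 {ι : Type*} (Φ : Finset ι)
    (ξ γ γe κsf κ vmax Dst Dsf vbar amin A B1 : ℝ) (B : ι → ℝ)
    (hξ : 0 < ξ) (hγ : 0 < γ) (hγe : 0 < γe)
    (hκ : 0 < κ) (hκsf : κ ≤ κsf) (hvmax : 0 < vmax) (hD : Dsf < Dst)
    (hvbar : 0 < vbar) (hamin : 0 < amin)
    (hA : 0 ≤ A) (hB1 : 0 ≤ B1) (hB : ∀ k ∈ Φ, 0 ≤ B k)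
    (hAub : A ≤ (1 - ξ * κsf) ^ 2 / (4 * ξ) - ξ * (γ - (1 - ξ * κsf) / (2 * ξ)) ^ 2)
    (hAlb : A * κ * (Dst - Dsf) ≥
      (|κsf - ξ * κsf ^ 2 - B1| + ∑ k ∈ Φ, B k) * vbar + ξ * κsf * amin)
    (D0 v0 a0 v1 a1 : ℝ → ℝ) (vk : ι → ℝ → ℝ)
    (hD0 : ∀ t ≥ (0 : ℝ), HasDerivAt D0 (v1 t - v0 t) t)
    (hv0 : ∀ t ≥ (0 : ℝ), HasDerivAt v0 (a0 t) t)
    (hv1 : ∀ t ≥ (0 : ℝ), HasDerivAt v1 (a1 t) t)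
    (ha1cont : ContinuousOn a1 (Set.Ici (0 : ℝ)))
    (hvkcont : ∀ k ∈ Φ, ContinuousOn (vk k) (Set.Ici (0 : ℝ)))
    (ha0 : ∀ t ≥ (0 : ℝ), HasDerivAt a0
      ((A * (min (κ * (D0 t - Dst)) vmax - v0 t) + B1 * (min (v1 t) vmax - v0 t)
        + (∑ k ∈ Φ, B k * (min (vk k t) vmax - v0 t)) - a0 t) / ξ) t)
    (hv0pos : ∀ t ≥ (0 : ℝ), 0 ≤ v0 t)
    (hv1bd : ∀ t ≥ (0 : ℝ), |v1 t - v0 t| ≤ vbar)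
    (hvkbd : ∀ t ≥ (0 : ℝ), ∀ k ∈ Φ, |vk k t - v0 t| ≤ vbar)
    (ha1bd : ∀ t ≥ (0 : ℝ), a1 t ≥ -amin)
    (hh0 : κsf * (D0 0 - Dsf) - v0 0 ≥ 0)
    (hhe0 : κsf * (v1 0 - v0 0) - a0 0 + γ * (κsf * (D0 0 - Dsf) - v0 0) ≥ 0) :
    ∀ t ≥ (0 : ℝ),
      κsf * (D0 t - Dsf) - v0 t ≥ 0 ∧
      κsf * (v1 t - v0 t) - a0 t + γ * (κsf * (D0 t - Dsf) - v0 t) ≥ 0 := by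
  have hκsf0 : (0:ℝ) < κsf := lt_of_lt_of_le hκ hκsf
  have hξ0 : ξ ≠ 0 := ne_of_gt hξ
  have hκsfne : κsf ≠ 0 := ne_of_gt hκsf0
  -- condition (35) upper bound simplifies
  have hAub' : A ≤ γ * (1 - ξ * κsf - ξ * γ) := by
    have e : (1 - ξ * κsf) ^ 2 / (4 * ξ) - ξ * (γ - (1 - ξ * κsf) / (2 * ξ)) ^ 2
        = γ * (1 - ξ * κsf - ξ * γ) := by
      field_simp
      ring
    rw [e] at hAub
    exact hAub
  set c : ℝ := (1 - ξ * κsf - ξ * γ) / ξ with hc_def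
  set α : ℝ := ((1 - ξ * κsf) * γ - ξ * γ ^ 2 - A * (κ / κsf)) / ξ with hα_def
  have hc0 : 0 ≤ c := by
    apply div_nonneg _ hξ.le
    nlinarith
  have hα0 : 0 ≤ α := by
    apply div_nonneg _ hξ.le
    have h1 : κ / κsf ≤ 1 := (div_le_one hκsf0).mpr hκsf
    have h2 : A * (κ / κsf) ≤ A := by nlinarith
    nlinarith
  set lam : ℝ := (-(γ - c) + Real.sqrt ((γ - c) ^ 2 + 4 * α)) / 2 with hlam_def
  have hs0 : 0 ≤ Real.sqrt ((γ - c) ^ 2 + 4 * α) := Real.sqrt_nonneg _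
  have hs2 : Real.sqrt ((γ - c) ^ 2 + 4 * α) ^ 2 = (γ - c) ^ 2 + 4 * α :=
    Real.sq_sqrt (by positivity)
  have hlam0 : 0 ≤ lam := by
    rw [hlam_def]
    rcases le_or_gt (γ - c) 0 with h | h
    · linarith
    · have : γ - c ≤ Real.sqrt ((γ - c) ^ 2 + 4 * α) := by nlinarith
      linarith
  have hlameq : lam ^ 2 + (γ - c) * lam - α = 0 := by
    rw [hlam_def]
    linear_combination hs2 / 4
  -- the functions u = h, w = h_e and their derivatives
  set u : ℝ → ℝ := fun t => κsf * (D0 t - Dsf) - v0 t with hu_def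
  set w : ℝ → ℝ := fun t =>
    κsf * (v1 t - v0 t) - a0 t + γ * (κsf * (D0 t - Dsf) - v0 t) with hw_def
  set w' : ℝ → ℝ := fun t =>
    κsf * (a1 t - a0 t) -
      ((A * (min (κ * (D0 t - Dst)) vmax - v0 t) + B1 * (min (v1 t) vmax - v0 t)
        + (∑ k ∈ Φ, B k * (min (vk k t) vmax - v0 t)) - a0 t) / ξ)
      + γ * (κsf * (v1 t - v0 t) - a0 t) with hw'_def
  have hu' : ∀ t ≥ (0:ℝ), HasDerivAt u (w t - γ * u t) t := by
    intro t ht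
    have h1 : HasDerivAt u (κsf * (v1 t - v0 t) - a0 t) t :=
      (((hD0 t ht).sub_const Dsf).const_mul κsf).sub (hv0 t ht)
    convert h1 using 1
    simp only [hu_def, hw_def]
    ring
  have hw' : ∀ t ≥ (0:ℝ), HasDerivAt w (w' t) t := by
    intro t ht
    have h1 := (((hv1 t ht).sub (hv0 t ht)).const_mul κsf).sub (ha0 t ht)
    have h2 := ((((hD0 t ht).sub_const Dsf).const_mul κsf).sub (hv0 t ht)).const_mul γ
    exact h1.add h2
  -- the key differential inequality for w
  have hwkey : ∀ t ≥ (0:ℝ), α * u t - c * w t ≤ w' t := by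
    intro t ht
    have hv0t := hv0pos t ht
    have hmin1 : min (κ * (D0 t - Dst)) vmax - v0 t ≤ κ / κsf * u t - κ * (Dst - Dsf) := by
      have h1 := min_le_left (κ * (D0 t - Dst)) vmax
      have h2 : κ * (D0 t - Dst) - v0 t
          = κ / κsf * u t - κ * (Dst - Dsf) + (κ / κsf - 1) * v0 t := by
        simp only [hu_def]
        field_simp
        ring
      have h3 : (κ / κsf - 1) * v0 t ≤ 0 := by
        have : κ / κsf ≤ 1 := (div_le_one hκsf0).mpr hκsf
        nlinarith
      linarith
    have hA1 : A * (min (κ * (D0 t - Dst)) vmax - v0 t)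
        ≤ A * (κ / κsf * u t - κ * (Dst - Dsf)) := mul_le_mul_of_nonneg_left hmin1 hA
    have hB1t : B1 * (min (v1 t) vmax - v0 t) ≤ B1 * (v1 t - v0 t) :=
      mul_le_mul_of_nonneg_left (by linarith [min_le_left (v1 t) vmax]) hB1
    have hSum : (∑ k ∈ Φ, B k * (min (vk k t) vmax - v0 t)) ≤ (∑ k ∈ Φ, B k) * vbar := by
      rw [Finset.sum_mul]
      refine Finset.sum_le_sum fun k hk => ?_
      refine mul_le_mul_of_nonneg_left ?_ (hB k hk)
      have h1 := (abs_le.mp (hvkbd t ht k hk)).2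
      linarith [min_le_left (vk k t) vmax]
    have ha1t : -(ξ * κsf * amin) ≤ ξ * κsf * a1 t := by
      have h1 : -amin ≤ a1 t := ha1bd t ht
      nlinarith [mul_pos hξ hκsf0]
    have hσ : -(|κsf - ξ * κsf ^ 2 - B1| * vbar)
        ≤ (κsf - ξ * κsf ^ 2 - B1) * (v1 t - v0 t) := by
      have h1 := neg_abs_le ((κsf - ξ * κsf ^ 2 - B1) * (v1 t - v0 t))
      rw [abs_mul] at h1
      have h2 : |κsf - ξ * κsf ^ 2 - B1| * |v1 t - v0 t|
          ≤ |κsf - ξ * κsf ^ 2 - B1| * vbar :=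
        mul_le_mul_of_nonneg_left (hv1bd t ht) (abs_nonneg _)
      linarith
    have hgoal : ξ * (α * u t - c * w t) ≤ ξ * w' t := by
      have e1 : ξ * (α * u t - c * w t)
          = ((1 - ξ * κsf) * γ - ξ * γ ^ 2 - A * (κ / κsf)) * u t
            - (1 - ξ * κsf - ξ * γ) * w t := by
        rw [hα_def, hc_def]
        field_simp
      have e2 : ξ * w' t
          = ξ * κsf * a1 t
            + (1 - ξ * κsf) * (κsf * (v1 t - v0 t) + γ * u t - w t)
            - (A * (min (κ * (D0 t - Dst)) vmax - v0 t) + B1 * (min (v1 t) vmax - v0 t)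
              + (∑ k ∈ Φ, B k * (min (vk k t) vmax - v0 t)))
            + ξ * γ * w t - ξ * γ ^ 2 * u t := by
        simp only [hw'_def, hw_def, hu_def]
        field_simp
        ring
      rw [e1, e2]
      have hAlb' := hAlb
      nlinarith [hA1, hB1t, hSum, ha1t, hσ, hAlb']
    exact le_of_mul_le_mul_left hgoal hξ
  -- first Grönwall: z = w + lam * u stays nonnegative
  set z : ℝ → ℝ := fun t => w t + lam * u t with hz_def
  have hz' : ∀ t ≥ (0:ℝ), HasDerivAt z (w' t + lam * (w t - γ * u t)) t :=
    fun t ht => (hw' t ht).add ((hu' t ht).const_mul lam)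
  have hzineq : ∀ t ≥ (0:ℝ), -(c - lam) * z t ≤ w' t + lam * (w t - γ * u t) := by
    intro t ht
    have h1 := hwkey t ht
    have e : -(c - lam) * z t = α * u t - c * w t + lam * (w t - γ * u t) := by
      simp only [hz_def]
      linear_combination (u t) * hlameq
    rw [e]
    linarith
  have hz0 : 0 ≤ z 0 := by
    simp only [hz_def]
    have h1 : 0 ≤ u 0 := hh0
    have h2 : 0 ≤ w 0 := hhe0
    nlinarith
  have hznn : ∀ t ≥ (0:ℝ), 0 ≤ z t := gron_nonneg (c - lam) hz' hzineq hz0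
  -- second Grönwall: u stays nonnegative
  have huineq : ∀ t ≥ (0:ℝ), -(γ + lam) * u t ≤ w t - γ * u t := by
    intro t ht
    have h1 := hznn t ht
    simp only [hz_def] at h1
    linarith
  have hunn : ∀ t ≥ (0:ℝ), 0 ≤ u t := gron_nonneg (γ + lam) hu' huineq hh0
  -- third Grönwall: w stays nonnegative
  have hwineq2 : ∀ t ≥ (0:ℝ), -c * w t ≤ w' t := by
    intro t ht
    have h1 := hwkey t ht
    have h2 := mul_nonneg hα0 (hunn t ht)
    linarith
  have hwnn : ∀ t ≥ (0:ℝ), 0 ≤ w t := gron_nonneg c hw' hwineq2 hhe0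
  intro t ht
  exact ⟨hunn t ht, hwnn t ht⟩
end

section
/- Let ξ > 0, γ > 0, γ_e > 0, κ_sf ≥ κ > 0, v_max > 0, D_st > D_sf, v̄ > 0, a_min > 0, A ≥ 0, B1 ≥ 0, and B_k ≥ 0 for k in a finite index set Φ. Let D0, v0, a0, v1, a1 ∈ ℝ and v_k ∈ ℝ (k ∈ Φ) satisfy: v0 ≥ 0, |v1 − v0| ≤ v̄, |v_k − v0| ≤ v̄ for all k ∈ Φ, a1 ≥ −a_min, h := κ_sf·(D0 − D_sf) − v0 ≥ 0, and h_e := κ_sf·(v1 − v0) − a0 + γ·h = 0. If A ≤ (1 − ξ·κ_sf)²/(4ξ) − ξ·(γ − (1 − ξ·κ_sf)/(2ξ))² and A·κ·(D_st − D_sf) ≥ (|κ_sf − ξ·κ_sf² − B1| + Σ_{k∈Φ} B_k)·v̄ + ξ·κ_sf·a_min, then k_s ≥ k_d, where k_d = A·(V(D0) − v0) + B1·(W(v1) − v0) + Σ_{k∈Φ} B_k·(W(v_k) − v0) and k_s = (1 − ξ·κ_sf)·a0 + ξ·κ_sf·a1 + ξ·γ·(κ_sf·(v1 − v0) − a0)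 + ξ·γ_e·(κ_sf·(v1 − v0) − a0 + γ·(κ_sf·(D0 − D_sf) − v0)). -/
set_option maxHeartbeats 1000000


/-- Core inequality of Theorem 3 (Appendix B): on the boundary `h_e = 0`, `h ≥ 0`,
the safe input `k_s` dominates the nominal CCC input `k_d`. -/
theorem stmt_1 {ι : Type*} (Φ : Finset ι)
    (ξ γ γe κsf κ vmax Dst Dsf vbar amin A B1 : ℝ) (B : ι → ℝ)
    (hξ : 0 < ξ) (hγ : 0 < γ) (hγe : 0 < γe)
    (hκ : 0 < κ) (hκsf : κ ≤ κsf) (hvmax : 0 < vmax) (hD : Dsf < Dst)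
    (hvbar : 0 < vbar) (hamin : 0 < amin)
    (hA : 0 ≤ A) (hB1 : 0 ≤ B1) (hB : ∀ k ∈ Φ, 0 ≤ B k)
    (D0 v0 a0 v1 a1 : ℝ) (vk : ι → ℝ)
    (hv0 : 0 ≤ v0) (hv1 : |v1 - v0| ≤ vbar) (hvk : ∀ k ∈ Φ, |vk k - v0| ≤ vbar)
    (ha1 : a1 ≥ -amin)
    (hh : κsf * (D0 - Dsf) - v0 ≥ 0)
    (hhe : κsf * (v1 - v0) - a0 + γ * (κsf * (D0 - Dsf) - v0) = 0)
    (hAub : A ≤ (1 - ξ * κsf) ^ 2 / (4 * ξ) - ξ * (γ - (1 - ξ * κsf) / (2 * ξ)) ^ 2)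
    (hAlb : A * κ * (Dst - Dsf) ≥
      (|κsf - ξ * κsf ^ 2 - B1| + ∑ k ∈ Φ, B k) * vbar + ξ * κsf * amin) :
    (1 - ξ * κsf) * a0 + ξ * κsf * a1 + ξ * γ * (κsf * (v1 - v0) - a0)
      + ξ * γe * (κsf * (v1 - v0) - a0 + γ * (κsf * (D0 - Dsf) - v0))
    ≥ A * (min (κ * (D0 - Dst)) vmax - v0) + B1 * (min v1 vmax - v0)
      + ∑ k ∈ Φ, B k * (min (vk k) vmax - v0) := by
  have hκsfpos : 0 < κsf := lt_of_lt_of_le hκ hκsf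
  -- upper bound on A in friendly form
  have heq : (1 - ξ * κsf) ^ 2 / (4 * ξ) - ξ * (γ - (1 - ξ * κsf) / (2 * ξ)) ^ 2
      = γ * (1 - ξ * κsf) - ξ * γ ^ 2 := by
    field_simp
    ring
  have hc : A ≤ γ * (1 - ξ * κsf) - ξ * γ ^ 2 := heq ▸ hAub
  -- sum bound
  have hsum : ∑ k ∈ Φ, B k * (min (vk k) vmax - v0) ≤ (∑ k ∈ Φ, B k) * vbar := by
    rw [Finset.sum_mul]
    apply Finset.sum_le_sum
    intro k hk
    have h1 := abs_le.mp (hvk k hk)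
    have h2 := min_le_left (vk k) vmax
    have hb := hB k hk
    nlinarith [h1.2, h2]
  -- B1 term
  have hB1t : B1 * (min v1 vmax - v0) ≤ B1 * (v1 - v0) := by
    have := min_le_left v1 vmax
    apply mul_le_mul_of_nonneg_left (by linarith) hB1
  -- A term
  have hD0 : 0 ≤ D0 - Dsf := by nlinarith [hh, hv0]
  have hAt : A * (min (κ * (D0 - Dst)) vmax - v0)
      ≤ A * ((κsf * (D0 - Dsf) - v0) - κ * (Dst - Dsf)) := by
    apply mul_le_mul_of_nonneg_left _ hA
    have hm := min_le_left (κ * (D0 - Dst)) vmax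
    nlinarith [mul_nonneg (sub_nonneg.mpr hκsf) hD0]
  -- |x|(v1-v0) bound
  have hx : (κsf - ξ * κsf ^ 2 - B1) * (v1 - v0) ≥ -(|κsf - ξ * κsf ^ 2 - B1| * vbar) := by
    have h2 : |(κsf - ξ * κsf ^ 2 - B1) * (v1 - v0)| ≤ |κsf - ξ * κsf ^ 2 - B1| * vbar := by
      rw [abs_mul]
      exact mul_le_mul_of_nonneg_left hv1 (abs_nonneg _)
    linarith [neg_abs_le ((κsf - ξ * κsf ^ 2 - B1) * (v1 - v0))]
  -- nonneg coefficient times h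
  have hch : 0 ≤ (γ * (1 - ξ * κsf) - ξ * γ ^ 2 - A) * (κsf * (D0 - Dsf) - v0) :=
    mul_nonneg (by linarith) hh
  -- a1 bound
  have ha1' : ξ * κsf * a1 ≥ ξ * κsf * (-amin) :=
    mul_le_mul_of_nonneg_left ha1 (by positivity)
  have ha0 : a0 = κsf * (v1 - v0) + γ * (κsf * (D0 - Dsf) - v0) := by linarith
  subst ha0
  linarith [hsum, hB1t, hAt, hx, hch, ha1', hAlb]
end

section
/- Let ξ > 0, γ > 0, γ_e > 0, κ_sf ≥ κ > 0, v_max > 0, D_st > D_sf, v̄ > 0, ā > 0, A ≥ 0, B1 ≥ 0, B_k ≥ 0 for k in a finite index set Φ, and C1, C_k ∈ ℝ (k ∈ Φ). Let D0, v0, a0, v1, a1 ∈ ℝ and v_k, a_k ∈ ℝ (k ∈ Φ) satisfy: v0 ≥ 0, |v1 − v0| ≤ v̄, |v_k − v0| ≤ v̄ for all k ∈ Φ, a1 ∈ [−ā, ā], a_k ∈ [−ā, ā] for all k ∈ Φ, h := κ_sf·(D0 − D_sf) − v0 ≥ 0, and h_e := κ_sf·(v1 − v0) − a0 + γ·h =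 0. Set N1 = |κ_sf − ξ·κ_sf² − B1| + Σ_{k∈Φ} B_k and N2 = |ξ·κ_sf − C1| + Σ_{k∈Φ} |C_k|. If (N1·v̄ + N2·ā)/(κ·(D_st − D_sf)) ≤ A ≤ (1 − ξ·κ_sf)²/(4ξ) − ξ·(γ − (1 − ξ·κ_sf)/(2ξ))², then k_s ≥ k_d, where k_d = A·(V(D0) − v0) + B1·(W(v1) − v0) + Σ_{k∈Φ} B_k·(W(v_k) − v0) + C1·a1 + Σ_{k∈Φ} C_k·a_k and k_s = (1 − ξ·κ_sf)·a0 + ξ·κ_sf·a1 + ξ·γ·(κ_sf·(v1 − v0) − a0) + ξ·γ_e·(κ_sf·(v1 − v0) − a0 + γ·(κ_sf·(D0 − D_sf) − v0)). -/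
/-- Core inequality of Theorem 5 (Appendix D): safety of CCC with acceleration feedback.
On the boundary `h_e = 0`, `h ≥ 0`, the safe input `k_s` dominates the nominal input `k_d`. -/
theorem stmt_2 {ι : Type*} (Φ : Finset ι)
    (ξ γ γe κsf κ vmax Dst Dsf vbar abar A B1 C1 : ℝ) (B C : ι → ℝ)
    (hξ : 0 < ξ) (hγ : 0 < γ) (hγe : 0 < γe)
    (hκ : 0 < κ) (hκsf : κ ≤ κsf) (hvmax : 0 < vmax) (hD : Dsf < Dst)
    (hvbar : 0 < vbar) (habar : 0 < abar)
    (hA : 0 ≤ A) (hB1 : 0 ≤ B1) (hB : ∀ k ∈ Φ, 0 ≤ B k)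
    (D0 v0 a0 v1 a1 : ℝ) (vk ak : ι → ℝ)
    (hv0 : 0 ≤ v0) (hv1 : |v1 - v0| ≤ vbar) (hvk : ∀ k ∈ Φ, |vk k - v0| ≤ vbar)
    (ha1 : a1 ∈ Set.Icc (-abar) abar) (hak : ∀ k ∈ Φ, ak k ∈ Set.Icc (-abar) abar)
    (hh : κsf * (D0 - Dsf) - v0 ≥ 0)
    (hhe : κsf * (v1 - v0) - a0 + γ * (κsf * (D0 - Dsf) - v0) = 0)
    (hAlb : ((|κsf - ξ * κsf ^ 2 - B1| + ∑ k ∈ Φ, B k) * vbar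
        + (|ξ * κsf - C1| + ∑ k ∈ Φ, |C k|) * abar) / (κ * (Dst - Dsf)) ≤ A)
    (hAub : A ≤ (1 - ξ * κsf) ^ 2 / (4 * ξ) - ξ * (γ - (1 - ξ * κsf) / (2 * ξ)) ^ 2) :
    (1 - ξ * κsf) * a0 + ξ * κsf * a1 + ξ * γ * (κsf * (v1 - v0) - a0)
      + ξ * γe * (κsf * (v1 - v0) - a0 + γ * (κsf * (D0 - Dsf) - v0))
    ≥ A * (min (κ * (D0 - Dst)) vmax - v0) + B1 * (min v1 vmax - v0)
      + ∑ k ∈ Φ, B k * (min (vk k) vmax - v0) + C1 * a1 + ∑ k ∈ Φ, C k * ak k := by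
  have hκsf0 : 0 < κsf := lt_of_lt_of_le hκ hκsf
  have hD0 : 0 ≤ D0 - Dsf := by nlinarith
  -- sum bounds
  have hsum1 : ∑ k ∈ Φ, B k * (min (vk k) vmax - v0) ≤ (∑ k ∈ Φ, B k) * vbar := by
    rw [Finset.sum_mul]
    refine Finset.sum_le_sum fun k hk => ?_
    have h1 := (abs_le.1 (hvk k hk)).2
    have h2 := min_le_left (vk k) vmax
    exact mul_le_mul_of_nonneg_left (by linarith) (hB k hk)
  have hsum2 : ∑ k ∈ Φ, C k * ak k ≤ (∑ k ∈ Φ, |C k|) * abar := by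
    rw [Finset.sum_mul]
    refine Finset.sum_le_sum fun k hk => ?_
    calc C k * ak k ≤ |C k * ak k| := le_abs_self _
      _ = |C k| * |ak k| := abs_mul _ _
      _ ≤ |C k| * abar :=
          mul_le_mul_of_nonneg_left (abs_le.2 ⟨(hak k hk).1, (hak k hk).2⟩) (abs_nonneg _)
  -- abs bounds
  have h4 : -(|κsf - ξ * κsf ^ 2 - B1| * vbar) ≤ (κsf - ξ * κsf ^ 2 - B1) * (v1 - v0) := by
    have h' : |(κsf - ξ * κsf ^ 2 - B1) * (v1 - v0)| ≤ |κsf - ξ * κsf ^ 2 - B1| * vbar := by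
      rw [abs_mul]; exact mul_le_mul_of_nonneg_left hv1 (abs_nonneg _)
    linarith [neg_abs_le ((κsf - ξ * κsf ^ 2 - B1) * (v1 - v0))]
  have ha1' : |a1| ≤ abar := abs_le.2 ⟨ha1.1, ha1.2⟩
  have h5 : -(|ξ * κsf - C1| * abar) ≤ (ξ * κsf - C1) * a1 := by
    have h' : |(ξ * κsf - C1) * a1| ≤ |ξ * κsf - C1| * abar := by
      rw [abs_mul]; exact mul_le_mul_of_nonneg_left ha1' (abs_nonneg _)
    linarith [neg_abs_le ((ξ * κsf - C1) * a1)]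
  -- min bound for the A term
  have h6 : min (κ * (D0 - Dst)) vmax - v0
      ≤ (κsf * (D0 - Dsf) - v0) - κ * (Dst - Dsf) := by
    have h1 := min_le_left (κ * (D0 - Dst)) vmax
    have h2 : (0:ℝ) ≤ (κsf - κ) * (D0 - Dsf) := mul_nonneg (by linarith) hD0
    nlinarith
  have h6A : A * (min (κ * (D0 - Dst)) vmax - v0)
      ≤ A * ((κsf * (D0 - Dsf) - v0) - κ * (Dst - Dsf)) :=
    mul_le_mul_of_nonneg_left h6 hA
  -- lower bound on A
  have hden : 0 < κ * (Dst - Dsf) := mul_pos hκ (by linarith)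
  have h7 : (|κsf - ξ * κsf ^ 2 - B1| + ∑ k ∈ Φ, B k) * vbar
      + (|ξ * κsf - C1| + ∑ k ∈ Φ, |C k|) * abar ≤ A * (κ * (Dst - Dsf)) :=
    (div_le_iff₀ hden).1 hAlb
  -- upper bound on A
  have h8 : A ≤ (1 - ξ * κsf) * γ - ξ * γ ^ 2 := by
    have key : (1 - ξ * κsf) ^ 2 / (4 * ξ) - ξ * (γ - (1 - ξ * κsf) / (2 * ξ)) ^ 2
        = (1 - ξ * κsf) * γ - ξ * γ ^ 2 := by
      field_simp; ring
    linarith [key ▸ hAub]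
  have h9 : 0 ≤ ((1 - ξ * κsf) * γ - ξ * γ ^ 2 - A) * (κsf * (D0 - Dsf) - v0) :=
    mul_nonneg (by linarith) hh
  have hB1t : B1 * (min v1 vmax - v0) ≤ B1 * (v1 - v0) :=
    mul_le_mul_of_nonneg_left (by linarith [min_le_left v1 vmax]) hB1
  have ha0 : a0 = κsf * (v1 - v0) + γ * (κsf * (D0 - Dsf) - v0) := by linarith
  subst ha0
  linarith [hsum1, hsum2, h4, h5, h6A, h7, h9, hB1t]
end

section
/- Let κ > 0, κ_sf > 0, a_min > 0, D_st > D_sf, and ξ > 0 with ξ·κ_sf < 1. Suppose there exist γ > 0, v̄ > 0, A ∈ ℝ, B1 ≥ 0, and B_k ≥ 0 for k in a finite index set Φ such that A·κ·(D_st − D_sf) ≥ (|κ_sf − ξ·κ_sf² − B1| + Σ_{k∈Φ} B_k)·v̄ + ξ·κ_sf·a_min and A ≤ (1 − ξ·κ_sf)²/(4ξ) − ξ·(γ − (1 − ξ·κ_sf)/(2ξ))². Then ξ ≤ 1/(κ_sf + 2·√(κ_sf·a_min/(κ·(D_st − D_sf)))). -/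
/-- Corollary 4: safe control gains exist only if the lag `ξ` does not exceed the
critical value `ξ_cr = 1/(κ_sf + 2√(κ_sf·a_min/(κ·(D_st − D_sf))))`. -/
theorem stmt_3 {ι : Type*} (Φ : Finset ι)
    (ξ κ κsf amin Dst Dsf : ℝ)
    (hκ : 0 < κ) (hκsf : 0 < κsf) (hamin : 0 < amin) (hD : Dsf < Dst)
    (hξ : 0 < ξ) (hξκ : ξ * κsf < 1)
    (hexists : ∃ (γ vbar A : ℝ) (B1 : ℝ) (B : ι → ℝ),
      0 < γ ∧ 0 < vbar ∧ 0 ≤ B1 ∧ (∀ k ∈ Φ, 0 ≤ B k) ∧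
      A * κ * (Dst - Dsf) ≥
        (|κsf - ξ * κsf ^ 2 - B1| + ∑ k ∈ Φ, B k) * vbar + ξ * κsf * amin ∧
      A ≤ (1 - ξ * κsf) ^ 2 / (4 * ξ) - ξ * (γ - (1 - ξ * κsf) / (2 * ξ)) ^ 2) :
    ξ ≤ 1 / (κsf + 2 * Real.sqrt (κsf * amin / (κ * (Dst - Dsf)))) := by
  obtain ⟨γ, vbar, A, B1, B, hγ, hvbar, hB1, hB, h1, h2⟩ := hexists
  have hDpos : (0:ℝ) < Dst - Dsf := by linarith
  have hden : (0:ℝ) < κ * (Dst - Dsf) := by positivity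
  set c : ℝ := κsf * amin / (κ * (Dst - Dsf)) with hc
  have hcpos : 0 < c := by positivity
  set s : ℝ := Real.sqrt c with hs
  have hspos : 0 < s := Real.sqrt_pos.mpr hcpos
  have hssq : s ^ 2 = c := Real.sq_sqrt hcpos.le
  -- step 1: A * κ * (Dst - Dsf) ≥ ξ * κsf * amin
  have hnn : 0 ≤ (|κsf - ξ * κsf ^ 2 - B1| + ∑ k ∈ Φ, B k) * vbar := by
    apply mul_nonneg _ hvbar.le
    exact add_nonneg (abs_nonneg _) (Finset.sum_nonneg hB)
  have hstep1 : ξ * κsf * amin ≤ A * κ * (Dst - Dsf) := by linarith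
  -- step 2: A ≤ (1 - ξκsf)^2/(4ξ)
  have hstep2 : A ≤ (1 - ξ * κsf) ^ 2 / (4 * ξ) := by nlinarith [sq_nonneg (γ - (1 - ξ * κsf) / (2 * ξ))]
  -- combine: 4 ξ^2 c ≤ (1-ξκsf)^2, i.e. (2ξs)^2 ≤ (1-ξκsf)^2
  have hkey : (2 * ξ * s) ^ 2 ≤ (1 - ξ * κsf) ^ 2 := by
    have h3 : ξ * κsf * amin ≤ (1 - ξ * κsf) ^ 2 / (4 * ξ) * (κ * (Dst - Dsf)) := by
      calc ξ * κsf * amin ≤ A * κ * (Dst - Dsf) := hstep1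
        _ = A * (κ * (Dst - Dsf)) := by ring
        _ ≤ (1 - ξ * κsf) ^ 2 / (4 * ξ) * (κ * (Dst - Dsf)) := by
            exact mul_le_mul_of_nonneg_right hstep2 hden.le
    have hcval : c * (κ * (Dst - Dsf)) = κsf * amin := by
      rw [hc]; exact div_mul_cancel₀ _ hden.ne'
    have : (2 * ξ * s) ^ 2 = 4 * ξ ^ 2 * c := by rw [mul_pow, mul_pow, hssq]; ring
    rw [this]
    have h4 : 4 * ξ * (ξ * κsf * amin) ≤ (1 - ξ * κsf) ^ 2 * (κ * (Dst - Dsf)) := by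
      have := mul_le_mul_of_nonneg_left h3 (by positivity : (0:ℝ) ≤ 4 * ξ)
      calc 4 * ξ * (ξ * κsf * amin) ≤ 4 * ξ * ((1 - ξ * κsf) ^ 2 / (4 * ξ) * (κ * (Dst - Dsf))) := this
        _ = (1 - ξ * κsf) ^ 2 * (κ * (Dst - Dsf)) := by field_simp
    have h5 : 4 * ξ ^ 2 * c * (κ * (Dst - Dsf)) ≤ (1 - ξ * κsf) ^ 2 * (κ * (Dst - Dsf)) := by
      calc 4 * ξ ^ 2 * c * (κ * (Dst - Dsf)) = 4 * ξ * (c * (κ * (Dst - Dsf))) * ξ := by ring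
        _ = 4 * ξ * (ξ * κsf * amin) := by rw [hcval]; ring
        _ ≤ _ := h4
    exact le_of_mul_le_mul_right h5 hden
  have hpos1 : 0 < 1 - ξ * κsf := by linarith
  have hle : 2 * ξ * s ≤ 1 - ξ * κsf := by
    nlinarith [mul_pos (mul_pos (by norm_num : (0:ℝ) < 2) hξ) hspos]
  have hdpos : 0 < κsf + 2 * s := by positivity
  rw [le_div_iff₀ hdpos]
  nlinarith
end

section
/- Let ξ > 0, κ_sf > 0, γ > 0, γ_e > 0, D_sf ∈ ℝ. Let D0, v0, a0, v1 : [0,∞) → ℝ be differentiable, with v1 having derivative a1 := v1′, and let k_d : [0,∞) → ℝ be any function. Suppose that for all t ≥ 0: D0′(t) = v1(t) − v0(t), v0′(t) = a0(t), and a0′(t) = (u0(t) − a0(t))/ξ, where u0(t) = min{k_d(t), k_s(t)} and k_s(t) = (1 − ξ·κ_sf)·a0(t) + ξ·κ_sf·a1(t) + ξ·γ·(κ_sf·(v1(t) − v0(t)) − a0(t)) + ξ·γ_e·(κ_sf·(v1(t) − v0(t)) − a0(t) + γ·(κ_sf·(D0(t) − D_sf) − v0(t))). Define h(t) = κ_sf·(D0(t)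 − D_sf) − v0(t) and h_e(t) = κ_sf·(v1(t) − v0(t)) − a0(t) + γ·h(t). If h(0) ≥ 0 and h_e(0) ≥ 0, then h(t) ≥ 0 and h_e(t) ≥ 0 for all t ≥ 0. -/
/-- Grönwall-type lemma: if `f' ≥ -c·f` on `[0,∞)` and `f 0 ≥ 0`, then `f ≥ 0` on `[0,∞)`. -/
lemma gronwall_nonneg (c : ℝ) (f f' : ℝ → ℝ)
    (hf : ∀ t ≥ (0 : ℝ), HasDerivAt f (f' t) t)
    (hineq : ∀ t ≥ (0 : ℝ), -c * f t ≤ f' t)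
    (h0 : 0 ≤ f 0) : ∀ t ≥ (0 : ℝ), 0 ≤ f t := by
  set g : ℝ → ℝ := fun t => f t * Real.exp (c * t) with hg_def
  have hg : ∀ t ≥ (0 : ℝ), HasDerivAt g ((f' t + c * f t) * Real.exp (c * t)) t := by
    intro t ht
    have h1 : HasDerivAt (fun t => Real.exp (c * t)) (Real.exp (c * t) * c) t := by
      simpa using ((hasDerivAt_id t).const_mul c).exp
    have h2 := (hf t ht).mul h1
    exact h2.congr_deriv (by ring)
  have hmono : MonotoneOn g (Set.Ici (0 : ℝ)) := by
    apply monotoneOn_of_deriv_nonneg (convex_Ici 0)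
    · intro t ht
      exact (hg t ht).continuousAt.continuousWithinAt
    · intro t ht
      rw [interior_Ici] at ht
      exact (hg t ht.le).differentiableAt.differentiableWithinAt
    · intro t ht
      rw [interior_Ici] at ht
      rw [(hg t ht.le).deriv]
      have := hineq t ht.le
      have : 0 ≤ f' t + c * f t := by linarith
      exact mul_nonneg this (Real.exp_pos _).le
  intro t ht
  have hle : g 0 ≤ g t := hmono Set.self_mem_Ici ht ht
  have hg0 : g 0 = f 0 := by simp [hg_def]
  have : 0 ≤ f t * Real.exp (c * t) := by
    rw [hg_def] at hle; simp only at hle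
    calc (0:ℝ) ≤ f 0 := h0
    _ = g 0 := hg0.symm
    _ ≤ g t := hle
  exact (mul_nonneg_iff_of_pos_right (Real.exp_pos _)).mp this

/-- Safety of the safety-critical CCC: with the safety filter `u0 = min{k_d, k_s}`,
where `k_s` is the CBF-based safe input (32), the set where both
`h = κ_sf(D0 − D_sf) − v0 ≥ 0` and `h_e = κ_sf(v1 − v0) − a0 + γ·h ≥ 0` is forward
invariant for the CAV dynamics with first-order lag, regardless of the nominal
controller `k_d`. -/
theorem stmt_7 (ξ κsf γ γe Dsf : ℝ)
    (hξ : 0 < ξ) (hκsf : 0 < κsf) (hγ : 0 < γ) (hγe : 0 < γe)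
    (D0 v0 a0 v1 a1 kd : ℝ → ℝ)
    (hD0 : ∀ t ≥ (0 : ℝ), HasDerivAt D0 (v1 t - v0 t) t)
    (hv0 : ∀ t ≥ (0 : ℝ), HasDerivAt v0 (a0 t) t)
    (hv1 : ∀ t ≥ (0 : ℝ), HasDerivAt v1 (a1 t) t)
    (ha0 : ∀ t ≥ (0 : ℝ), HasDerivAt a0
      ((min (kd t)
          ((1 - ξ * κsf) * a0 t + ξ * κsf * a1 t
            + ξ * γ * (κsf * (v1 t - v0 t) - a0 t)
            + ξ * γe * (κsf * (v1 t - v0 t) - a0 t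
                + γ * (κsf * (D0 t - Dsf) - v0 t)))
        - a0 t) / ξ) t)
    (hh0 : κsf * (D0 0 - Dsf) - v0 0 ≥ 0)
    (hhe0 : κsf * (v1 0 - v0 0) - a0 0 + γ * (κsf * (D0 0 - Dsf) - v0 0) ≥ 0) :
    ∀ t ≥ (0 : ℝ),
      κsf * (D0 t - Dsf) - v0 t ≥ 0 ∧
      κsf * (v1 t - v0 t) - a0 t + γ * (κsf * (D0 t - Dsf) - v0 t) ≥ 0 := by
  set ks : ℝ → ℝ := fun t =>
    (1 - ξ * κsf) * a0 t + ξ * κsf * a1 t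
      + ξ * γ * (κsf * (v1 t - v0 t) - a0 t)
      + ξ * γe * (κsf * (v1 t - v0 t) - a0 t
          + γ * (κsf * (D0 t - Dsf) - v0 t)) with hks_def
  set he : ℝ → ℝ := fun t =>
    κsf * (v1 t - v0 t) - a0 t + γ * (κsf * (D0 t - Dsf) - v0 t) with hhe_def
  set he' : ℝ → ℝ := fun t =>
    κsf * (a1 t - a0 t) - (min (kd t) (ks t) - a0 t) / ξ
      + γ * (κsf * (v1 t - v0 t) - a0 t) with hhe'_def
  have hheD : ∀ t ≥ (0 : ℝ), HasDerivAt he (he' t) t := by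
    intro t ht
    have hA := ((hv1 t ht).sub (hv0 t ht)).const_mul κsf
    have hB := ha0 t ht
    have hC := ((((hD0 t ht).sub_const Dsf).const_mul κsf).sub (hv0 t ht)).const_mul γ
    have h1 := (hA.sub hB).add hC
    exact h1
  have hineq : ∀ t ≥ (0 : ℝ), -γe * he t ≤ he' t := by
    intro t ht
    have hmin : min (kd t) (ks t) ≤ ks t := min_le_right _ _
    have hdiv : (min (kd t) (ks t) - a0 t) / ξ ≤ (ks t - a0 t) / ξ := by
      gcongr
    have key : (ks t - a0 t) / ξ
        = κsf * (a1 t - a0 t) + γ * (κsf * (v1 t - v0 t) - a0 t) + γe * he t := by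
      rw [hks_def, hhe_def]
      field_simp
      ring
    rw [hhe'_def]
    simp only
    linarith
  have he_nonneg : ∀ t ≥ (0 : ℝ), 0 ≤ he t :=
    gronwall_nonneg γe he he' hheD hineq hhe0
  set h : ℝ → ℝ := fun t => κsf * (D0 t - Dsf) - v0 t with hh_def
  have hhD : ∀ t ≥ (0 : ℝ), HasDerivAt h (κsf * (v1 t - v0 t) - a0 t) t := by
    intro t ht
    exact (((hD0 t ht).sub_const Dsf).const_mul κsf).sub (hv0 t ht)
  have hineq2 : ∀ t ≥ (0 : ℝ), -γ * h t ≤ κsf * (v1 t - v0 t) - a0 t := by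
    intro t ht
    have := he_nonneg t ht
    rw [hhe_def] at this
    simp only at this
    rw [hh_def]
    simp only
    linarith
  have h_nonneg : ∀ t ≥ (0 : ℝ), 0 ≤ h t :=
    gronwall_nonneg γ h (fun t => κsf * (v1 t - v0 t) - a0 t) hhD hineq2 hh0
  intro t ht
  refine ⟨h_nonneg t ht, ?_⟩
  have := he_nonneg t ht
  rw [hhe_def] at this
  simpa using this
end

section
/- Let ξ > 0, κ > 0, A > 0, and B1, Bn1 ∈ ℝ. Then there exists Ω > 0 such that iΩ is a root of the polynomial ξ·s³ + s² + (A + B1 + Bn1)·s + A·κ if and only if Bn1 = A·(κ·ξ − 1) − B1. -/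
open Complex in
/-- Plant stability boundary (58) in the `(B1, B_{n+1})` plane: a purely imaginary root
`s = iΩ`, `Ω > 0`, of `ξs³ + s² + (A + B1 + B_{n+1})s + Aκ` exists if and only if
`B_{n+1} = A(κξ − 1) − B1`. -/
theorem stmt_14 (ξ κ A B1 Bn1 : ℝ) (hξ : 0 < ξ) (hκ : 0 < κ) (hA : 0 < A) :
    (∃ Ω : ℝ, 0 < Ω ∧
      (ξ : ℂ) * (I * Ω) ^ 3 + (I * Ω) ^ 2 + ((A : ℂ) + B1 + Bn1) * (I * Ω) + (A : ℂ) * κ = 0)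
    ↔ Bn1 = A * (κ * ξ - 1) - B1 := by
  constructor
  · rintro ⟨Ω, hΩ, h⟩
    rw [Complex.ext_iff] at h
    simp [Complex.add_re, Complex.add_im, Complex.mul_re, Complex.mul_im, pow_succ] at h
    obtain ⟨h1, h2⟩ := h
    have hΩ2 : Ω * Ω = A * κ := by linarith
    have hcancel : (A + B1 + Bn1) * Ω = (ξ * (A * κ)) * Ω := by
      linear_combination h2 + ξ * Ω * hΩ2
    have := mul_right_cancel₀ (ne_of_gt hΩ) hcancel
    nlinarith
  · intro h
    subst h
    refine ⟨Real.sqrt (A * κ), Real.sqrt_pos.mpr (by positivity), ?_⟩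
    have hs : Real.sqrt (A * κ) * Real.sqrt (A * κ) = A * κ :=
      Real.mul_self_sqrt (by positivity)
    rw [Complex.ext_iff]
    constructor
    · simp [Complex.add_re, Complex.add_im, Complex.mul_re, Complex.mul_im, pow_succ]
      linarith
    · simp [Complex.add_re, Complex.add_im, Complex.mul_re, Complex.mul_im, pow_succ]
      linear_combination (-(ξ * Real.sqrt (A * κ))) * hs
end

section
/- Let A_h > 0, κ_h > 0, B_h ≥ 0, τ ≥ 0, and n ∈ ℕ. For real ω define the complex number T(ω) = (B_h·(iω) + A_h·κ_h)/(exp(iωτ)·(iω)² + (A_h + B_h)·(iω) + A_h·κ_h). Then, as ω → 0 through nonzero values, Im(T(ω)ⁿ)/ω converges to −n/κ_h. -/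
open Complex Filter

/-- First L'Hôpital limit of equation (66): for the human-driver link frequency
response `T(ω) = (B_h·iω + A_h·κ_h)/(e^{iωτ}(iω)² + (A_h + B_h)·iω + A_h·κ_h)`,
the imaginary part of the `n`-vehicle head-to-tail transfer function satisfies
`Γ_I(ω)/ω → −n/κ_h` as `ω → 0`, `ω ≠ 0`. -/
theorem stmt_15 (Ah κh Bh τ : ℝ) (n : ℕ)
    (hAh : 0 < Ah) (hκh : 0 < κh) (hBh : 0 ≤ Bh) (hτ : 0 ≤ τ) :
    Tendsto (fun ω : ℝ =>
        (((((Bh : ℂ) * (I * ω) + (Ah : ℂ) * κh) /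
          (Complex.exp (I * ω * τ) * (I * ω) ^ 2 + ((Ah : ℂ) + Bh) * (I * ω)
            + (Ah : ℂ) * κh)) ^ n).im) / ω)
      (nhdsWithin 0 {0}ᶜ) (nhds (-(n : ℝ) / κh)) := by
  set g : ℝ → ℂ := fun ω =>
    (((Bh : ℂ) * (I * ω) + (Ah : ℂ) * κh) /
      (Complex.exp (I * ω * τ) * (I * ω) ^ 2 + ((Ah : ℂ) + Bh) * (I * ω)
        + (Ah : ℂ) * κh)) ^ n with hg
  have hAκ : (Ah : ℂ) * κh ≠ 0 :=
    mul_ne_zero (by exact_mod_cast hAh.ne') (by exact_mod_cast hκh.ne')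
  have hid : HasDerivAt (fun ω : ℝ => (ω : ℂ)) 1 (0 : ℝ) := by
    have := Complex.ofRealCLM.hasDerivAt (x := (0 : ℝ))
    exact this
  have hIω : HasDerivAt (fun ω : ℝ => I * (ω : ℂ)) I 0 := by
    simpa using hid.const_mul I
  have hN : HasDerivAt (fun ω : ℝ => (Bh : ℂ) * (I * ω) + (Ah : ℂ) * κh)
      ((Bh : ℂ) * I) 0 := by
    simpa using (hIω.const_mul (Bh : ℂ)).add_const ((Ah : ℂ) * κh)
  have hexp : HasDerivAt (fun ω : ℝ => Complex.exp (I * ω * τ)) (I * τ) 0 := by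
    have h1 : HasDerivAt (fun ω : ℝ => I * (ω : ℂ) * τ) (I * τ) 0 := by
      simpa using hIω.mul_const (τ : ℂ)
    simpa using h1.cexp
  have hsq : HasDerivAt (fun ω : ℝ => (I * (ω : ℂ)) ^ 2) 0 0 := by
    have h2 : HasDerivAt (fun ω : ℝ => I * (ω : ℂ) * (I * ω)) 0 0 := by
      have := hIω.mul hIω
      simp at this
      exact this
    simp only [pow_two]
    exact h2
  have hD : HasDerivAt (fun ω : ℝ =>
      Complex.exp (I * ω * τ) * (I * ω) ^ 2 + ((Ah : ℂ) + Bh) * (I * ω)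
        + (Ah : ℂ) * κh) (((Ah : ℂ) + Bh) * I) 0 := by
    have h1 := (hexp.mul hsq).add (hIω.const_mul ((Ah : ℂ) + Bh))
    simpa using h1.add_const ((Ah : ℂ) * κh)
  have hD0 : (Complex.exp (I * (0:ℝ) * τ) * (I * (0:ℝ)) ^ 2
      + ((Ah : ℂ) + Bh) * (I * (0:ℝ)) + (Ah : ℂ) * κh) ≠ 0 := by
    simpa using hAκ
  have hT := hN.div hD hD0
  have hG : HasDerivAt g (-(n : ℂ) * I / κh) 0 := by
    have hp := hasDerivAt_pow (𝕜 := ℂ) n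
      (((Bh : ℂ) * (I * (0:ℝ)) + (Ah : ℂ) * κh) /
        (Complex.exp (I * (0:ℝ) * τ) * (I * (0:ℝ)) ^ 2 + ((Ah : ℂ) + Bh) * (I * (0:ℝ))
          + (Ah : ℂ) * κh))
    have h := HasDerivAt.scomp (x := (0:ℝ)) hp hT
    convert h using 1
    · rfl
    · rfl
    have hκ : (κh : ℂ) ≠ 0 := by exact_mod_cast hκh.ne'
    have hA : (Ah : ℂ) ≠ 0 := by exact_mod_cast hAh.ne'
    simp only [Complex.ofReal_zero, mul_zero, zero_mul, Complex.exp_zero, one_mul,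
      pow_two, zero_add, add_zero, div_self hAκ, one_pow, mul_one, smul_eq_mul]
    field_simp
    ring
  have hslope := hasDerivAt_iff_tendsto_slope.mp hG
  have him : Tendsto (fun ω : ℝ => (slope g 0 ω).im) (nhdsWithin 0 {0}ᶜ)
      (nhds (-(n : ℝ) / κh)) := by
    have := (Complex.continuous_im.tendsto _).comp hslope
    have hval : (-(n : ℂ) * I / κh).im = -(n : ℝ) / κh := by
      rw [div_ofReal_im]
      simp [neg_div]
    rw [hval] at this
    exact this
  have hg0 : g 0 = 1 := by
    simp [hg, div_self hAκ]
  refine him.congr fun ω => ?_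
  rw [slope_def_module, sub_zero, hg0, Complex.smul_im]
  simp [hg, div_eq_inv_mul, mul_comm]
end

section
/- Let A_h > 0, κ_h > 0, B_h ≥ 0, τ ≥ 0, and n ∈ ℕ. For real ω define the complex number T(ω) = (B_h·(iω) + A_h·κ_h)/(exp(iωτ)·(iω)² + (A_h + B_h)·(iω) + A_h·κ_h). Then, as ω → 0 through nonzero values, (1 − |T(ω)ⁿ|²)/ω² converges to n·(A_h + 2·B_h − 2·κ_h)/(A_h·κ_h²). -/
open Complex Filter

/-- Second L'Hôpital limit of equation (66): for the human-driver link frequency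
response `T(ω) = (B_h·iω + A_h·κ_h)/(e^{iωτ}(iω)² + (A_h + B_h)·iω + A_h·κ_h)`,
`(1 − |T(ω)ⁿ|²)/ω² → n(A_h + 2B_h − 2κ_h)/(A_h·κ_h²)` as `ω → 0`, `ω ≠ 0`. -/
theorem stmt_16 (Ah κh Bh τ : ℝ) (n : ℕ)
    (hAh : 0 < Ah) (hκh : 0 < κh) (hBh : 0 ≤ Bh) (hτ : 0 ≤ τ) :
    Tendsto (fun ω : ℝ =>
        (1 - ‖(((Bh : ℂ) * (I * ω) + (Ah : ℂ) * κh) /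
          (Complex.exp (I * ω * τ) * (I * ω) ^ 2 + ((Ah : ℂ) + Bh) * (I * ω)
            + (Ah : ℂ) * κh)) ^ n‖ ^ 2) / ω ^ 2)
      (nhdsWithin 0 {0}ᶜ) (nhds ((n : ℝ) * (Ah + 2 * Bh - 2 * κh) / (Ah * κh ^ 2))) := by
  have hAκ : Ah * κh ≠ 0 := by positivity
  set P : ℝ → ℝ := fun ω => Bh ^ 2 * ω ^ 2 + (Ah * κh) ^ 2 with hPdef
  set Q : ℝ → ℝ := fun ω =>
    (Ah * κh - ω ^ 2 * Real.cos (ω * τ)) ^ 2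
      + ((Ah + Bh) * ω - ω ^ 2 * Real.sin (ω * τ)) ^ 2 with hQdef
  set R : ℝ → ℝ := fun ω =>
    (Ah + Bh) ^ 2 - Bh ^ 2
      + ω ^ 2 * ((Real.cos (ω * τ)) ^ 2 + (Real.sin (ω * τ)) ^ 2)
      - 2 * (Ah * κh) * Real.cos (ω * τ)
      - 2 * (Ah + Bh) * ω * Real.sin (ω * τ) with hRdef
  have hN : ∀ ω : ℝ, Complex.normSq ((Bh : ℂ) * (I * ω) + (Ah : ℂ) * κh) = P ω := by
    intro ω
    simp [hPdef, Complex.normSq_apply, Complex.add_re, Complex.add_im,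
      Complex.mul_re, Complex.mul_im]
    ring
  have hD : ∀ ω : ℝ,
      Complex.normSq (Complex.exp (I * ω * τ) * (I * ω) ^ 2 + ((Ah : ℂ) + Bh) * (I * ω)
        + (Ah : ℂ) * κh) = Q ω := by
    intro ω
    simp [hQdef, Complex.normSq_apply, Complex.add_re, Complex.add_im,
      Complex.mul_re, Complex.mul_im, Complex.exp_re, Complex.exp_im, pow_two]
    ring
  have habs : ∀ ω : ℝ,
      (‖(((Bh : ℂ) * (I * ω) + (Ah : ℂ) * κh) /
          (Complex.exp (I * ω * τ) * (I * ω) ^ 2 + ((Ah : ℂ) + Bh) * (I * ω)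
            + (Ah : ℂ) * κh)) ^ n‖) ^ 2 = (P ω / Q ω) ^ n := by
    intro ω
    rw [norm_pow, ← pow_mul, mul_comm n 2, pow_mul, norm_div, div_pow,
      Complex.sq_norm, Complex.sq_norm, hN, hD, div_pow]
  have hQP : ∀ ω : ℝ, Q ω - P ω = ω ^ 2 * R ω := by
    intro ω; simp only [hPdef, hQdef, hRdef]; ring
  have hQcont : Continuous Q := by fun_prop
  have hPcont : Continuous P := by fun_prop
  have hRcont : Continuous R := by fun_prop
  have hQ0 : Q 0 = (Ah * κh) ^ 2 := by simp [hQdef]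
  have hP0 : P 0 = (Ah * κh) ^ 2 := by simp [hPdef]
  have hR0 : R 0 = Ah ^ 2 + 2 * Ah * Bh - 2 * Ah * κh := by simp [hRdef]; ring
  have hQ0ne : Q 0 ≠ 0 := by rw [hQ0]; positivity
  -- target function
  set G : ℝ → ℝ := fun ω => (R ω / Q ω) * ∑ k ∈ Finset.range n, (P ω / Q ω) ^ k with hGdef
  have hG0 : G 0 = (n : ℝ) * (Ah + 2 * Bh - 2 * κh) / (Ah * κh ^ 2) := by
    simp [hGdef, hR0, hP0, hQ0, div_self (pow_ne_zero 2 hAκ)]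
    field_simp
  have hGcont : ContinuousAt G 0 := by
    apply ContinuousAt.mul
    · exact (hRcont.continuousAt).div hQcont.continuousAt hQ0ne
    · exact tendsto_finset_sum (Finset.range n) fun k _ =>
        (((hPcont.continuousAt).div hQcont.continuousAt hQ0ne).pow k)
  have hGlim : Tendsto G (nhdsWithin 0 {0}ᶜ) (nhds ((n : ℝ) * (Ah + 2 * Bh - 2 * κh) / (Ah * κh ^ 2))) := by
    rw [← hG0]
    exact hGcont.continuousWithinAt.tendsto
  refine hGlim.congr' ?_
  have hQev : ∀ᶠ ω in nhds (0:ℝ), Q ω ≠ 0 := hQcont.continuousAt.eventually_ne hQ0ne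
  filter_upwards [hQev.filter_mono nhdsWithin_le_nhds, self_mem_nhdsWithin] with ω hQω hω
  have hω0 : ω ≠ 0 := hω
  rw [habs ω]
  have hgeo : (1 : ℝ) - (P ω / Q ω) ^ n
      = (1 - P ω / Q ω) * ∑ k ∈ Finset.range n, (P ω / Q ω) ^ k := by
    have h := geom_sum_mul (P ω / Q ω) n
    nlinarith [h]
  have h1x : 1 - P ω / Q ω = ω ^ 2 * R ω / Q ω := by
    field_simp
    linarith [hQP ω]
  rw [hgeo, h1x, hGdef]
  field_simp
end
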